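/- arXiv:2208.06740 — 2 statements merged into one kernel-verified Lean document; each statement's English description precedes it below -/
import Mathlib

section
/- Let Ω ⊆ ℝ^{d+1} be an open set which is M₀-quasiconvex: for all z, z' ∈ Ω there is a rectifiable curve contained in Ω joining z to z' with length at most M₀|z−z'|. Let g : Ω → ℝ^{d+1} be C¹, let z₀ ∈ Ω with Dg(z₀) invertible and ‖Dg(z₀)‖·‖Dg(z₀)^{-1}‖ ≤ K, and suppose that for some δ > 0 one has ‖Dg(z)∘Dg(z₀)^{-1} − I‖ ≤ δ for all z ∈ Ω. Define L_{z₀}(z) = z₀ + Dg(z₀)(z − z₀) and φ = g ∘ L_{z₀}^{-1} on L_{z₀}(Ω). Then there is a constant C depending only on M₀ and K such that (1 − Cδ)|w − w'| ≤ |φ(w) − φ(w')| ≤ (1 + Cδ)|w − w'| for all w, w' ∈ L_{z₀}(Ω), and ‖Dφ(w) − I‖ ≤ δ for all w ∈ L_{z₀}(Ω). -/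
/-!
On `U = L(Ω)` the map `φ = g ∘ L⁻¹` has `Dφ(w) = Dg(L⁻¹ w) ∘ Dg(z₀)⁻¹`, so `‖Dφ - I‖ ≤ δ` there.
Hence `φ - id` is `δ`-Lipschitz on small balls around any compact subset of `U`, and summing
along a fine partition of a curve shows that it moves by at most `δ` times the curve's length.
Since `L` is `‖Dg(z₀)‖`-Lipschitz and `‖Dg(z₀)⁻¹‖`-antilipschitz, `U` is quasiconvex with
constant `M₀ K`, so `|(φ w - w) - (φ w' - w')| ≤ M₀ K δ |w - w'|`, which gives both bounds.
-/

open Metric Set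
open scoped ENNReal NNReal

open Finset in
theorem edist_le_mul_eVariationOn_of_lipschitzOnWith_ball {E F : Type*} [PseudoMetricSpace E]
    [PseudoEMetricSpace F] {f : E → F} {δ : ℝ≥0} {γ : ℝ → E} {a b : ℝ} (hab : a ≤ b)
    (hγ : ContinuousOn γ (Icc a b)) {ε : ℝ} (hε : 0 < ε)
    (hf : ∀ t ∈ Icc a b, LipschitzOnWith δ f (ball (γ t) ε)) :
    edist (f (γ a)) (f (γ b)) ≤ δ * eVariationOn γ (Icc a b) := by
  obtain ⟨η, hη, hγη⟩ :=
    uniformContinuousOn_iff.1 (isCompact_Icc.uniformContinuousOn_of_continuous hγ) ε hε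
  obtain ⟨N, hN⟩ := exists_nat_gt ((b - a) / η)
  have hN0 : (0 : ℝ) < N := (div_nonneg (sub_nonneg.2 hab) hη.le).trans_lt hN
  set u : ℕ → ℝ := fun i => a + (b - a) * (i / N)
  have hu_mono : Monotone u := fun i j hij => by
    have := sub_nonneg.2 hab
    simp only [u]; gcongr
  have hu_mem : ∀ i ∈ Set.Icc 0 N, u i ∈ Icc a b := fun i hi => by
    have h1 : (i : ℝ) / N ≤ 1 := (div_le_one hN0).2 (by exact_mod_cast hi.2)
    have h0 : 0 ≤ (i : ℝ) / N := by positivity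
    constructor <;> nlinarith
  have hstep : ∀ i < N, dist (γ (u (i + 1))) (γ (u i)) < ε := fun i hi =>
    hγη _ (hu_mem _ ⟨i.zero_le.trans i.le_succ, hi⟩) _ (hu_mem _ ⟨i.zero_le, hi.le⟩) <| by
      rw [Real.dist_eq, abs_of_nonneg (sub_nonneg.2 (hu_mono i.le_succ))]
      simp only [u, Nat.cast_succ]
      rw [show a + (b - a) * ((i + 1) / N) - (a + (b - a) * (i / N)) = (b - a) / N by ring,
        div_lt_iff₀ hN0, mul_comm]
      exact (div_lt_iff₀ hη).1 hN
  calc edist (f (γ a)) (f (γ b)) = edist (f (γ (u 0))) (f (γ (u N))) := by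
        simp only [u, CharP.cast_eq_zero, zero_div, mul_zero, add_zero, div_self hN0.ne',
          mul_one, add_sub_cancel]
    _ ≤ ∑ i ∈ range N, edist (f (γ (u i))) (f (γ (u (i + 1)))) :=
        edist_le_range_sum_edist (fun i => f (γ (u i))) N
    _ ≤ ∑ i ∈ range N, δ * edist (γ (u (i + 1))) (γ (u i)) := by
        refine sum_le_sum fun i hi => ?_
        rw [edist_comm]
        exact hf _ (hu_mem i ⟨i.zero_le, (mem_range.1 hi).le⟩)
          (mem_ball.2 (hstep i (mem_range.1 hi))) (mem_ball_self hε)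
    _ = δ * ∑ i ∈ Ico 0 N, edist (γ (u (i + 1))) (γ (u i)) := by rw [mul_sum, range_eq_Ico]
    _ ≤ δ * eVariationOn γ (Icc a b) :=
        mul_le_mul_right (eVariationOn.sum_le_of_monotoneOn_Icc (hu_mono.monotoneOn _) hu_mem) _

theorem IsCompact.exists_lipschitzOnWith_ball_of_nnnorm_hasFDerivAt_le {E F : Type*}
    [NormedAddCommGroup E] [NormedSpace ℝ E] [NormedAddCommGroup F] [NormedSpace ℝ F]
    {f : E → F} {f' : E → E →L[ℝ] F} {U K : Set E} {δ : ℝ≥0} (hK : IsCompact K) (hU : IsOpen U)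
    (hKU : K ⊆ U) (hf : ∀ x ∈ U, HasFDerivAt f (f' x) x) (hf' : ∀ x ∈ U, ‖f' x‖₊ ≤ δ) :
    ∃ ε > 0, ∀ x ∈ K, LipschitzOnWith δ f (ball x ε) := by
  obtain ⟨ε, hε, hεU⟩ := hK.exists_thickening_subset_open hU hKU
  refine ⟨ε, hε, fun x hx => ?_⟩
  have hball : ball x ε ⊆ U := (ball_subset_thickening hx ε).trans hεU
  exact (convex_ball x ε).lipschitzOnWith_of_nnnorm_hasFDerivWithin_le
    (fun y hy => (hf y (hball hy)).hasFDerivWithinAt) (fun y hy => hf' y (hball hy))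

theorem edist_le_mul_eVariationOn_of_nnnorm_hasFDerivAt_le {E F : Type*}
    [NormedAddCommGroup E] [NormedSpace ℝ E] [NormedAddCommGroup F] [NormedSpace ℝ F]
    {f : E → F} {f' : E → E →L[ℝ] F} {U : Set E} {δ : ℝ≥0} (hU : IsOpen U)
    (hf : ∀ x ∈ U, HasFDerivAt f (f' x) x) (hf' : ∀ x ∈ U, ‖f' x‖₊ ≤ δ)
    {γ : ℝ → E} {a b : ℝ} (hab : a ≤ b) (hγ : ContinuousOn γ (Icc a b))
    (hγU : MapsTo γ (Icc a b) U) :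
    edist (f (γ a)) (f (γ b)) ≤ δ * eVariationOn γ (Icc a b) := by
  obtain ⟨ε, hε, hfε⟩ := (isCompact_Icc.image_of_continuousOn hγ)
    |>.exists_lipschitzOnWith_ball_of_nnnorm_hasFDerivAt_le hU hγU.image_subset hf hf'
  exact edist_le_mul_eVariationOn_of_lipschitzOnWith_ball hab hγ hε
    fun t ht => hfε _ (mem_image_of_mem γ ht)

theorem abs_dist_sub_dist_le_dist_sub_sub {E : Type*} [SeminormedAddCommGroup E] (u v x y : E) :
    |dist u v - dist x y| ≤ dist (u - x) (v - y) := by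
  simpa only [dist_eq_norm, sub_sub_sub_comm] using abs_norm_sub_norm_le (u - v) (x - y)

def IsQuasiconvex {E : Type*} [PseudoMetricSpace E] (M : ℝ) (Ω : Set E) : Prop :=
  ∀ z ∈ Ω, ∀ z' ∈ Ω, ∃ γ : ℝ → E,
    ContinuousOn γ (Icc 0 1) ∧ γ 0 = z ∧ γ 1 = z' ∧ (∀ t ∈ Icc (0 : ℝ) 1, γ t ∈ Ω) ∧
      eVariationOn γ (Icc 0 1) ≤ ENNReal.ofReal (M * dist z z')

namespace IsQuasiconvex

variable {E : Type*} [PseudoMetricSpace E] {M : ℝ} {Ω : Set E}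

theorem mono (h : IsQuasiconvex M Ω) {M' : ℝ} (hM : M ≤ M') : IsQuasiconvex M' Ω := by
  intro z hz z' hz'
  obtain ⟨γ, hγc, hγ0, hγ1, hγΩ, hvar⟩ := h z hz z' hz'
  exact ⟨γ, hγc, hγ0, hγ1, hγΩ,
    hvar.trans (ENNReal.ofReal_le_ofReal (mul_le_mul_of_nonneg_right hM dist_nonneg))⟩

theorem image {F : Type*} [PseudoMetricSpace F] (h : IsQuasiconvex M Ω) (hM : 0 ≤ M) {L : E → F}
    {a b : ℝ≥0} (hLa : LipschitzWith a L) (hLb : AntilipschitzWith b L) :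
    IsQuasiconvex (a * b * M) (L '' Ω) := by
  rintro _ ⟨z, hz, rfl⟩ _ ⟨z', hz', rfl⟩
  obtain ⟨γ, hγc, rfl, rfl, hγΩ, hvar⟩ := h z hz z' hz'
  refine ⟨L ∘ γ, hLa.continuous.comp_continuousOn hγc, rfl, rfl,
    fun t ht => mem_image_of_mem L (hγΩ t ht), ?_⟩
  have hdist : a * (M * dist (γ 0) (γ 1)) ≤ a * b * M * dist (L (γ 0)) (L (γ 1)) := by
    have := hLb.le_mul_dist (γ 0) (γ 1)
    calc a * (M * dist (γ 0) (γ 1)) ≤ a * (M * (b * dist (L (γ 0)) (L (γ 1)))) := by gcongr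
      _ = _ := by ring
  calc eVariationOn (L ∘ γ) (Icc 0 1) ≤ a * eVariationOn γ (Icc 0 1) :=
        hLa.lipschitzOnWith.comp_eVariationOn_le (mapsTo_univ _ _)
    _ ≤ a * ENNReal.ofReal (M * dist (γ 0) (γ 1)) := mul_le_mul_right hvar _
    _ ≤ ENNReal.ofReal (a * b * M * dist (L (γ 0)) (L (γ 1))) := by
        rw [← ENNReal.ofReal_coe_nnreal, ← ENNReal.ofReal_mul a.coe_nonneg]
        exact ENNReal.ofReal_le_ofReal hdist

end IsQuasiconvex

theorem IsQuasiconvex.bilipschitz_of_norm_hasFDerivAt_sub_id_le {E : Type*}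
    [NormedAddCommGroup E] [NormedSpace ℝ E] {U : Set E} {C δ : ℝ} (hUC : IsQuasiconvex C U)
    (hU : IsOpen U) (hC : 0 ≤ C) (hδ : 0 ≤ δ) {φ : E → E} {φ' : E → E →L[ℝ] E}
    (hφ : ∀ w ∈ U, HasFDerivAt φ (φ' w) w)
    (hφ' : ∀ w ∈ U, ‖φ' w - ContinuousLinearMap.id ℝ E‖ ≤ δ) {w w' : E} (hw : w ∈ U)
    (hw' : w' ∈ U) :
    (1 - C * δ) * dist w w' ≤ dist (φ w) (φ w') ∧ dist (φ w) (φ w') ≤ (1 + C * δ) * dist w w' := by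
  obtain ⟨γ, hγc, rfl, rfl, hγU, hvar⟩ := hUC w hw w' hw'
  have hnorm : ∀ x ∈ U, ‖φ' x - ContinuousLinearMap.id ℝ E‖₊ ≤ δ.toNNReal := fun x hx => by
    rw [← NNReal.coe_le_coe, coe_nnnorm, Real.coe_toNNReal _ hδ]
    exact hφ' x hx
  have hedist := edist_le_mul_eVariationOn_of_nnnorm_hasFDerivAt_le hU
    (fun x hx => (hφ x hx).sub (hasFDerivAt_id x)) hnorm zero_le_one hγc hγU
  have hdev : dist (φ (γ 0) - γ 0) (φ (γ 1) - γ 1) ≤ C * δ * dist (γ 0) (γ 1) := by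
    rw [← edist_le_ofReal (by positivity)]
    calc edist (φ (γ 0) - γ 0) (φ (γ 1) - γ 1)
        ≤ ENNReal.ofReal δ * ENNReal.ofReal (C * dist (γ 0) (γ 1)) :=
          hedist.trans (mul_le_mul_right hvar _)
      _ = ENNReal.ofReal (C * δ * dist (γ 0) (γ 1)) := by
        rw [← ENNReal.ofReal_mul hδ]; ring_nf
  have := abs_le.1 ((abs_dist_sub_dist_le_dist_sub_sub _ _ _ _).trans hdev)
  constructor <;> linarith

section AffineMap

variable {𝕜 E : Type*} [NontriviallyNormedField 𝕜]

theorem lipschitzWith_const_add_apply_sub [SeminormedAddCommGroup E] [NormedSpace 𝕜 E] (z₀ : E)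
    (T : E →L[𝕜] E) : LipschitzWith ‖T‖₊ fun z => z₀ + T (z - z₀) :=
  LipschitzWith.of_dist_le_mul fun z z' => by
    simpa only [dist_eq_norm, add_sub_add_left_eq_sub, ← map_sub, sub_sub_sub_cancel_right,
      coe_nnnorm] using T.le_opNorm (z - z')

theorem hasFDerivAt_const_add_apply_sub [NormedAddCommGroup E] [NormedSpace 𝕜 E] (z₀ : E)
    (T : E →L[𝕜] E) (w : E) : HasFDerivAt (fun z => z₀ + T (z - z₀)) T w := by
  simpa using (T.hasFDerivAt.comp w ((hasFDerivAt_id w).sub_const z₀)).const_add z₀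

theorem leftInverse_const_add_apply_sub [SeminormedAddCommGroup E] [NormedSpace 𝕜 E] {z₀ : E}
    {S T : E →L[𝕜] E} (hST : S.comp T = ContinuousLinearMap.id 𝕜 E) :
    Function.LeftInverse (fun w => z₀ + S (w - z₀)) fun z => z₀ + T (z - z₀) := fun z => by
  simpa using congrArg (z₀ + ·) (ContinuousLinearMap.ext_iff.1 hST (z - z₀))

end AffineMap

/-- **Proposition `p:phibilip`**: let `Ω ⊆ ℝ^{d+1}` be open and `M₀`-quasiconvex, `g : Ω → ℝ^{d+1}`
be `C¹`, `z₀ ∈ Ω`, `Dg(z₀)` invertible with inverse `B` and condition number `≤ K`, and suppose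
`‖Dg(z) ∘ Dg(z₀)⁻¹ − I‖ ≤ δ` on `Ω`.  With `L(z) = z₀ + Dg(z₀)(z − z₀)` and `φ = g ∘ L⁻¹`,
the map `φ` is `(1 + Cδ)`-bi-Lipschitz on `L(Ω)` and `‖Dφ(w) − I‖ ≤ δ` there,
where `C` depends only on `M₀` and `K`. -/
theorem bilipschitz_of_slowly_varying_derivative (d : ℕ) (M₀ K : ℝ) :
    ∃ C : ℝ, 0 < C ∧
      ∀ (Ω : Set (EuclideanSpace ℝ (Fin (d + 1)))) (g : EuclideanSpace ℝ (Fin (d + 1)) → EuclideanSpace ℝ (Fin (d + 1))) (z₀ : EuclideanSpace ℝ (Fin (d + 1))) (δ : ℝ) (B : EuclideanSpace ℝ (Fin (d + 1)) →L[ℝ] EuclideanSpace ℝ (Fin (d + 1))),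
        IsOpen Ω →
        -- `Ω` is `M₀`-quasiconvex
        (∀ z ∈ Ω, ∀ z' ∈ Ω, ∃ γ : ℝ → (EuclideanSpace ℝ (Fin (d + 1))),
          ContinuousOn γ (Set.Icc 0 1) ∧ γ 0 = z ∧ γ 1 = z' ∧
          (∀ t ∈ Set.Icc (0 : ℝ) 1, γ t ∈ Ω) ∧
          eVariationOn γ (Set.Icc 0 1) ≤ ENNReal.ofReal (M₀ * dist z z')) →
        ContDiffOn ℝ 1 g Ω →
        z₀ ∈ Ω →
        -- `B = Dg(z₀)⁻¹`
        (fderiv ℝ g z₀).comp B = ContinuousLinearMap.id ℝ (EuclideanSpace ℝ (Fin (d + 1))) →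
        B.comp (fderiv ℝ g z₀) = ContinuousLinearMap.id ℝ (EuclideanSpace ℝ (Fin (d + 1))) →
        ‖fderiv ℝ g z₀‖ * ‖B‖ ≤ K →
        0 < δ →
        (∀ z ∈ Ω, ‖(fderiv ℝ g z).comp B - ContinuousLinearMap.id ℝ (EuclideanSpace ℝ (Fin (d + 1)))‖ ≤ δ) →
        -- conclusions about `φ = g ∘ L_{z₀}⁻¹` on `L_{z₀}(Ω)`
        (∀ w ∈ (fun z => z₀ + fderiv ℝ g z₀ (z - z₀)) '' Ω,
          ∀ w' ∈ (fun z => z₀ + fderiv ℝ g z₀ (z - z₀)) '' Ω,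
            (1 - C * δ) * dist w w' ≤
                dist (g (z₀ + B (w - z₀))) (g (z₀ + B (w' - z₀))) ∧
              dist (g (z₀ + B (w - z₀))) (g (z₀ + B (w' - z₀))) ≤ (1 + C * δ) * dist w w') ∧
        (∀ w ∈ (fun z => z₀ + fderiv ℝ g z₀ (z - z₀)) '' Ω,
          ‖fderiv ℝ (fun w' => g (z₀ + B (w' - z₀))) w - ContinuousLinearMap.id ℝ (EuclideanSpace ℝ (Fin (d + 1)))‖ ≤ δ) := by
  refine ⟨max (K * |M₀|) 1, lt_max_of_lt_right one_pos, ?_⟩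
  intro Ω g z₀ δ B hΩ hqc hg _ hAB hBA hK hδ₀ hδ
  set A := fderiv ℝ g z₀
  have hLψ : (fun z => z₀ + A (z - z₀)) '' Ω = (fun w => z₀ + B (w - z₀)) ⁻¹' Ω :=
    congrFun (image_eq_preimage_of_inverse (leftInverse_const_add_apply_sub hBA)
      (leftInverse_const_add_apply_sub hAB)) Ω
  have hφ : ∀ w ∈ (fun w => z₀ + B (w - z₀)) ⁻¹' Ω, HasFDerivAt (fun w => g (z₀ + B (w - z₀)))
      ((fderiv ℝ g (z₀ + B (w - z₀))).comp B) w := fun w hw =>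
    ((hg.differentiableOn one_ne_zero _ hw).differentiableAt (hΩ.mem_nhds hw)).hasFDerivAt.comp w
      (hasFDerivAt_const_add_apply_sub z₀ B w)
  have hqc' : IsQuasiconvex (max (K * |M₀|) 1) ((fun w => z₀ + B (w - z₀)) ⁻¹' Ω) := by
    rw [← hLψ]
    refine ((IsQuasiconvex.mono hqc (le_abs_self M₀)).image (abs_nonneg M₀)
      (lipschitzWith_const_add_apply_sub z₀ A) ((lipschitzWith_const_add_apply_sub z₀ B)
        |>.to_rightInverse (leftInverse_const_add_apply_sub hBA))).mono ?_
    calc ‖A‖ * ‖B‖ * |M₀| ≤ K * |M₀| := by gcongr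
      _ ≤ _ := le_max_left _ _
  rw [hLψ]
  refine ⟨fun w hw w' hw' => hqc'.bilipschitz_of_norm_hasFDerivAt_sub_id_le
    (hΩ.preimage (by fun_prop)) (by positivity) hδ₀.le hφ (fun w hw => hδ _ hw) hw hw',
    fun w hw => ?_⟩
  rw [(hφ w hw).fderiv]
  exact hδ _ hw
end

section
/- Fix ρ = 1/1000, c₀ = 1/500, K = 10⁴/ρ, A₀ = 1000√d/(c₀ρ), and for k ≥ 0 put r_k = 10^{-k} and let s(k) be the integer with 50ρ^{s(k)} ≤ r_k < 50ρ^{s(k)−1}. Let E ⊆ ℝ^{d+1} be closed, 𝒟 a Christ–David lattice for E with parameter ρ, and {P_Q}_{Q∈𝒟} any family of d-dimensional affine planes. For each k ≥ 0 let Y_k = { x_Q : Q ∈ 𝒟_{s(k)}, Q ∩ B(0,A₀) ≠ ∅ }, let X_k = {x_{j,k}}_{j∈J_k} ⊆ Y_k be an r_k-net of Y_k (points of X_k are r_k-separated and Y_k ⊆ ⋃_{x∈X_k} B(x, r_k)), write x_{j,k} = x_{Q_{j,k}}, B_{j,k} = B(x_{j,k}, r_k) and P_{j,k} = P_{Q_{j,k}}.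 For k ≥ 1 and y ∈ ℝ^{d+1}, define ε'_k(y) = sup{ d_{B(x_{i,l},100 r_l)}(P_{j,k}, P_{i,l}) : j ∈ J_k, l ∈ {k−1, k}, i ∈ J_l, y ∈ 10B_{j,k} ∩ 11B_{i,l} }, and for Q ∈ 𝒟 define ε(Q) = sup{ d_{K B_R}(P_U, P_R) : U, R ∈ 𝒟, k(R) ∈ {k(Q), k(Q)−1}, k(U) = k(Q), x_Q ∈ (K/10)B_U ∩ (K/10)B_R }. Then for any k ≥ 1, any Q ∈ 𝒟_{s(k)}, and any z ∈ ℝ^{d+1} with |z − x_Q| < 200ρ^{-1}ℓ(Q), one has ε'_k(z) ≤ K·ε(Q). -/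
open Metric MeasureTheory Set
open scoped ENNReal NNReal

noncomputable section

/-- The set of points of the affine plane through `p` with direction `V`. -/
def planeSet {n : ℕ} (p : EuclideanSpace ℝ (Fin n)) (V : Submodule ℝ (EuclideanSpace ℝ (Fin n))) :
    Set (EuclideanSpace ℝ (Fin n)) := {y | y - p ∈ V}

/-- Normalized distance `d_B(E', F)` between two sets inside a bounded set `B`:
`(2/diam B) · max( sup_{y ∈ E'∩B} dist(y,F), sup_{y ∈ F∩B} dist(y,E') )`. -/
def dIn {n : ℕ} (B E' F : Set (EuclideanSpace ℝ (Fin n))) : ℝ :=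
  (2 / Metric.diam B) *
    max (sSup ((fun y => Metric.infDist y F) '' (E' ∩ B)))
        (sSup ((fun y => Metric.infDist y E') '' (F ∩ B)))

/-- A Christ–David lattice of "cubes" for a closed set `E ⊆ ℝ^n` with parameter `ρ < 1/1000`
and `c₀ = 1/500`: for each `k ∈ ℤ`, `gen k` is the family of cubes of generation `k`, which are
Borel sets covering `E`, pairwise nested or disjoint, comparable to balls of radius
`ℓ(Q) = 5ρ^k` around their centers, and whose centers form a nested sequence of maximal
`ρ^k`-separated nets of `E`. -/
structure CDLattice (n : ℕ) (E : Set (EuclideanSpace ℝ (Fin n))) (ρ : ℝ) where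
  gen : ℤ → Set (Set (EuclideanSpace ℝ (Fin n)))
  ctr : ℤ → Set (EuclideanSpace ℝ (Fin n)) → EuclideanSpace ℝ (Fin n)
  borel : ∀ k : ℤ, ∀ Q ∈ gen k, MeasurableSet Q
  cover : ∀ k : ℤ, E = ⋃ Q ∈ gen k, Q
  nested : ∀ k l : ℤ, ∀ Q ∈ gen k, ∀ Q' ∈ gen l, (Q ∩ Q').Nonempty → Q ⊆ Q' ∨ Q' ⊆ Q
  ctr_mem : ∀ k : ℤ, ∀ Q ∈ gen k, ctr k Q ∈ E
  ball_inter_subset : ∀ k : ℤ, ∀ Q ∈ gen k,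
    Metric.ball (ctr k Q) ((1 / 500) * (5 * ρ ^ k)) ∩ E ⊆ Q
  subset_ball : ∀ k : ℤ, ∀ Q ∈ gen k, Q ⊆ Metric.ball (ctr k Q) (5 * ρ ^ k)
  separated : ∀ k : ℤ, ∀ Q ∈ gen k, ∀ Q' ∈ gen k, Q ≠ Q' → ρ ^ k ≤ dist (ctr k Q) (ctr k Q')
  net : ∀ k : ℤ, E ⊆ ⋃ Q ∈ gen k, Metric.closedBall (ctr k Q) (ρ ^ k)
  ctr_nested : ∀ k : ℤ, ∀ Q ∈ gen k, ∃ Q' ∈ gen (k + 1), ctr (k + 1) Q' = ctr k Q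

/-- The side length `ℓ(Q) = 5ρ^k` of a generation-`k` cube. -/
def sideLen (ρ : ℝ) (k : ℤ) : ℝ := 5 * ρ ^ k


/-- The coefficient `ε(Q)` adapted to the lattice `D` and the plane family `(Pp, PV)`:
`ε(Q) = sup { d_{K B_R}(P_U, P_R) : k(R) ∈ {k(Q), k(Q)−1}, k(U) = k(Q),
x_Q ∈ (K/10)B_U ∩ (K/10)B_R }`. -/
def epsCD {n : ℕ} {E : Set (EuclideanSpace ℝ (Fin n))} {ρ : ℝ} (D : CDLattice n E ρ)
    (Pp : ℤ → Set (EuclideanSpace ℝ (Fin n)) → EuclideanSpace ℝ (Fin n))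
    (PV : ℤ → Set (EuclideanSpace ℝ (Fin n)) → Submodule ℝ (EuclideanSpace ℝ (Fin n)))
    (K : ℝ) (kQ : ℤ) (Q : Set (EuclideanSpace ℝ (Fin n))) : ℝ :=
  sSup {t : ℝ | ∃ (kR : ℤ) (U R : Set (EuclideanSpace ℝ (Fin n))),
    (kR = kQ ∨ kR = kQ - 1) ∧ U ∈ D.gen kQ ∧ R ∈ D.gen kR ∧
    D.ctr kQ Q ∈ Metric.ball (D.ctr kQ U) ((K / 10) * sideLen ρ kQ) ∧
    D.ctr kQ Q ∈ Metric.ball (D.ctr kR R) ((K / 10) * sideLen ρ kR) ∧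
    t = dIn (Metric.ball (D.ctr kR R) (K * sideLen ρ kR))
          (planeSet (Pp kQ U) (PV kQ U)) (planeSet (Pp kR R) (PV kR R))}

/-- The David–Toro coefficient `ε'_k(y)` adapted to the nets `N k ⊆ 𝒟_{s(k)}`, with
`r_k = 10^{-k}`:
`ε'_k(y) = sup { d_{B(x_{i,l},100 r_l)}(P_{j,k}, P_{i,l}) : j ∈ J_k, l ∈ {k−1,k}, i ∈ J_l,
y ∈ 10B_{j,k} ∩ 11B_{i,l} }`. -/
def epsPrime {n : ℕ} {E : Set (EuclideanSpace ℝ (Fin n))} {ρ : ℝ} (D : CDLattice n E ρ)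
    (Pp : ℤ → Set (EuclideanSpace ℝ (Fin n)) → EuclideanSpace ℝ (Fin n))
    (PV : ℤ → Set (EuclideanSpace ℝ (Fin n)) → Submodule ℝ (EuclideanSpace ℝ (Fin n)))
    (s : ℕ → ℤ) (N : ℕ → Set (Set (EuclideanSpace ℝ (Fin n)))) (k : ℕ)
    (y : EuclideanSpace ℝ (Fin n)) : ℝ :=
  sSup {t : ℝ | ∃ (Q : Set (EuclideanSpace ℝ (Fin n))) (l : ℕ)
      (R : Set (EuclideanSpace ℝ (Fin n))),
    Q ∈ N k ∧ (l = k - 1 ∨ l = k) ∧ R ∈ N l ∧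
    y ∈ Metric.ball (D.ctr (s k) Q) (10 * (10 : ℝ) ^ (-(k : ℤ))) ∧
    y ∈ Metric.ball (D.ctr (s l) R) (11 * (10 : ℝ) ^ (-(l : ℤ))) ∧
    t = dIn (Metric.ball (D.ctr (s l) R) (100 * (10 : ℝ) ^ (-(l : ℤ))))
          (planeSet (Pp (s k) Q) (PV (s k) Q)) (planeSet (Pp (s l) R) (PV (s l) R))}

/-! The planes entering `ε'_k(z)` are those of two net cubes `Q' ∈ 𝒟_{s(k)}` and `R ∈ 𝒟_{s(l)}`
with `l ∈ {k - 1, k}`. Since `r_{k-1} = 10 r_k` and `ρ⁻¹ ≥ 10`, the generations satisfy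
`s(l) ∈ {s(k), s(k) - 1}`, and as `z` is close to `x_Q`, both centres lie in `(K/10)B`-balls around
`x_Q`: the pair `(Q', R)` is admissible in `ε(Q)`. Finally `B(x_R, 100 r_l) ⊆ K B_R` with radius
ratio at most `K`, and shrinking the ball costs at most that ratio in `d_B`. -/

section NormalizedDistance

variable {n : ℕ}

lemma sSup_image_infDist_nonneg {X : Type*} [PseudoMetricSpace X] (F S : Set X) :
    0 ≤ sSup ((fun y => infDist y F) '' S) :=
  Real.sSup_nonneg <| forall_mem_image.2 fun _ _ => infDist_nonneg

lemma sSup_image_infDist_mono {X : Type*} [PseudoMetricSpace X] (F : Set X) {S T : Set X}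
    (hST : S ⊆ T) (hT : Bornology.IsBounded T) :
    sSup ((fun y => infDist y F) '' S) ≤ sSup ((fun y => infDist y F) '' T) := by
  rcases S.eq_empty_or_nonempty with rfl | hS
  · simpa using sSup_image_infDist_nonneg F T
  · exact csSup_le_csSup ((lipschitz_infDist_pt F).isBounded_image hT).bddAbove (hS.image _)
      (image_mono hST)

lemma dIn_nonneg (B E' F : Set (EuclideanSpace ℝ (Fin n))) : 0 ≤ dIn B E' F :=
  mul_nonneg (div_nonneg zero_le_two diam_nonneg)
    ((sSup_image_infDist_nonneg F _).trans (le_max_left _ _))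

lemma dIn_ball_le_div_mul [NeZero n] (x : EuclideanSpace ℝ (Fin n)) {r₁ r₂ : ℝ} (h₁ : 0 < r₁)
    (h₁₂ : r₁ ≤ r₂) (A F : Set (EuclideanSpace ℝ (Fin n))) :
    dIn (ball x r₁) A F ≤ (r₂ / r₁) * dIn (ball x r₂) A F := by
  have h₂ : 0 < r₂ := h₁.trans_le h₁₂
  rw [dIn, dIn, diam_ball_eq x h₁.le, diam_ball_eq x h₂.le, ← mul_assoc,
    show r₂ / r₁ * (2 / (2 * r₂)) = 2 / (2 * r₁) by field_simp]
  gcongr _ * max ?_ ?_ <;>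
    exact sSup_image_infDist_mono _ (inter_subset_inter_right _ (ball_subset_ball h₁₂))
      (isBounded_ball.subset inter_subset_right)

lemma dIn_ball_le_mul [NeZero n] (x : EuclideanSpace ℝ (Fin n)) {r₁ r₂ M : ℝ} (h₁ : 0 < r₁)
    (h₁₂ : r₁ ≤ r₂) (hM : r₂ ≤ M * r₁) (A F : Set (EuclideanSpace ℝ (Fin n))) :
    dIn (ball x r₁) A F ≤ M * dIn (ball x r₂) A F :=
  (dIn_ball_le_div_mul x h₁ h₁₂ A F).trans <|
    mul_le_mul_of_nonneg_right ((div_le_iff₀ h₁).2 hM) (dIn_nonneg _ _ _)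

end NormalizedDistance

namespace CDLattice

variable {n : ℕ} {E : Set (EuclideanSpace ℝ (Fin n))} {ρ : ℝ} (D : CDLattice n E ρ)

lemma finite_setOf_mem_gen_dist_ctr_lt (hρ : 0 < ρ) (κ : ℤ) (x : EuclideanSpace ℝ (Fin n))
    (c : ℝ) : {U | U ∈ D.gen κ ∧ dist x (D.ctr κ U) < c}.Finite := by
  let _ : TopologicalSpace (D.gen κ) := ⊥
  have : DiscreteTopology (D.gen κ) := ⟨rfl⟩
  have hemb : Topology.IsClosedEmbedding fun U : D.gen κ => D.ctr κ U :=
    isClosedEmbedding_of_pairwise_le_dist (zpow_pos hρ κ) fun U V hUV =>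
      D.separated κ U U.2 V V.2 (Subtype.coe_injective.ne hUV)
  refine (((hemb.isCompact_preimage (isCompact_closedBall x c)).finite_of_discrete).image
    Subtype.val).subset ?_
  rintro U ⟨hU, hxU⟩
  exact ⟨⟨U, hU⟩, mem_closedBall'.2 hxU.le, rfl⟩

variable (Pp : ℤ → Set (EuclideanSpace ℝ (Fin n)) → EuclideanSpace ℝ (Fin n))
  (PV : ℤ → Set (EuclideanSpace ℝ (Fin n)) → Submodule ℝ (EuclideanSpace ℝ (Fin n)))
  (K : ℝ) (kQ : ℤ) (Q : Set (EuclideanSpace ℝ (Fin n)))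

lemma epsCD_nonneg : 0 ≤ epsCD D Pp PV K kQ Q :=
  Real.sSup_nonneg <| by
    rintro t ⟨kR, U, R, -, -, -, -, -, rfl⟩
    exact dIn_nonneg _ _ _

/- Only finitely many pairs `(U, R)` are admissible, the centres of each generation being
separated; without this `sSup` would be the junk value `0`. -/
lemma dIn_le_epsCD (hρ : 0 < ρ) {kR : ℤ} {U R : Set (EuclideanSpace ℝ (Fin n))}
    (hkR : kR = kQ ∨ kR = kQ - 1) (hU : U ∈ D.gen kQ) (hR : R ∈ D.gen kR)
    (hQU : D.ctr kQ Q ∈ ball (D.ctr kQ U) ((K / 10) * sideLen ρ kQ))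
    (hQR : D.ctr kQ Q ∈ ball (D.ctr kR R) ((K / 10) * sideLen ρ kR)) :
    dIn (ball (D.ctr kR R) (K * sideLen ρ kR))
        (planeSet (Pp kQ U) (PV kQ U)) (planeSet (Pp kR R) (PV kR R)) ≤
      epsCD D Pp PV K kQ Q := by
  let near (κ : ℤ) := {U | U ∈ D.gen κ ∧ dist (D.ctr kQ Q) (D.ctr κ U) < (K / 10) * sideLen ρ κ}
  let term (κ : ℤ) (p : Set (EuclideanSpace ℝ (Fin n)) × Set (EuclideanSpace ℝ (Fin n))) :=
    dIn (ball (D.ctr κ p.2) (K * sideLen ρ κ))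
      (planeSet (Pp kQ p.1) (PV kQ p.1)) (planeSet (Pp κ p.2) (PV κ p.2))
  have hfin : (⋃ κ ∈ ({kQ, kQ - 1} : Set ℤ), term κ '' (near kQ ×ˢ near κ)).Finite :=
    (toFinite _).biUnion fun κ _ =>
      ((D.finite_setOf_mem_gen_dist_ctr_lt hρ _ _ _).prod
        (D.finite_setOf_mem_gen_dist_ctr_lt hρ _ _ _)).image _
  refine le_csSup (hfin.bddAbove.mono ?_) ⟨kR, U, R, hkR, hU, hR, hQU, hQR, rfl⟩
  rintro t ⟨kR, U, R, hkR, hU, hR, hQU, hQR, rfl⟩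
  exact mem_biUnion hkR ⟨(U, R), ⟨⟨hU, hQU⟩, ⟨hR, hQR⟩⟩, rfl⟩

end CDLattice

lemma zpow_index_pred_eq_or {ρ c : ℝ} (hρ₀ : 0 < ρ) (hρ : ρ ≤ 1 / 10) (hc : 0 < c)
    {s : ℕ → ℤ} (hs : ∀ k : ℕ, c * ρ ^ s k ≤ (10 : ℝ) ^ (-(k : ℤ)) ∧
      (10 : ℝ) ^ (-(k : ℤ)) < c * ρ ^ (s k - 1))
    {k : ℕ} (hk : 1 ≤ k) : s (k - 1) = s k ∨ s (k - 1) = s k - 1 := by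
  have index_le {a b : ℤ} (h : c * ρ ^ b < c * ρ ^ (a - 1)) : a ≤ b := by
    have := (zpow_lt_zpow_iff_right_of_lt_one₀ hρ₀ (by linarith)).1 (lt_of_mul_lt_mul_left h hc.le)
    omega
  have hr : (10 : ℝ) ^ (-((k - 1 : ℕ) : ℤ)) = 10 * 10 ^ (-(k : ℤ)) := by
    rw [Nat.cast_sub hk, Nat.cast_one, neg_sub, sub_eq_neg_add, zpow_add_one₀ (by norm_num),
      mul_comm]
  obtain ⟨hlo, hhi⟩ := hs k
  obtain ⟨hlo', hhi'⟩ := hs (k - 1)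
  rw [hr] at hlo' hhi'
  have hpow : 10 * ρ ^ (s k - 1) ≤ ρ ^ (s k - 1 - 1) := by
    rw [zpow_sub_one₀ hρ₀.ne' (s k - 1)]
    have := zpow_pos hρ₀ (s k - 1)
    rw [le_mul_inv_iff₀ hρ₀]
    nlinarith
  have h₁ : s (k - 1) ≤ s k :=
    index_le (by linarith [zpow_pos (by norm_num : (0 : ℝ) < 10) (-(k : ℤ))])
  have h₂ : s k - 1 ≤ s (k - 1) :=
    index_le (by linarith [mul_le_mul_of_nonneg_left hpow hc.le])
  omega

theorem epsPrime_le_epsQ_general (d : ℕ) (E : Set (EuclideanSpace ℝ (Fin (d + 1))))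
    (D : CDLattice (d + 1) E (1 / 1000))
    (Pp : ℤ → Set (EuclideanSpace ℝ (Fin (d + 1))) → EuclideanSpace ℝ (Fin (d + 1)))
    (PV : ℤ → Set (EuclideanSpace ℝ (Fin (d + 1))) →
      Submodule ℝ (EuclideanSpace ℝ (Fin (d + 1))))
    (s : ℕ → ℤ)
    (hs : ∀ k : ℕ, 50 * (1 / 1000 : ℝ) ^ s k ≤ (10 : ℝ) ^ (-(k : ℤ)) ∧
      (10 : ℝ) ^ (-(k : ℤ)) < 50 * (1 / 1000 : ℝ) ^ (s k - 1))
    (N : ℕ → Set (Set (EuclideanSpace ℝ (Fin (d + 1)))))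
    -- every selected cube is a generation-`s(k)` cube meeting `B(0, A₀)`
    (hNsub : ∀ k : ℕ, ∀ Q ∈ N k, Q ∈ D.gen (s k) ∧
      (Q ∩ Metric.ball 0 ((1000 * Real.sqrt d) / ((1 / 500) * (1 / 1000)))).Nonempty) :
    ∀ k : ℕ, 1 ≤ k → ∀ Q ∈ D.gen (s k), ∀ z : EuclideanSpace ℝ (Fin (d + 1)),
      dist z (D.ctr (s k) Q) < 200 * (1 / 1000 : ℝ)⁻¹ * sideLen (1 / 1000) (s k) →
      epsPrime D Pp PV s N k z
        ≤ (10 ^ 4 / (1 / 1000 : ℝ)) * epsCD D Pp PV (10 ^ 4 / (1 / 1000 : ℝ)) (s k) Q := by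
  intro k hk Q hQ z hz
  refine Real.sSup_le ?_ (mul_nonneg (by norm_num) (D.epsCD_nonneg Pp PV _ _ Q))
  rintro t ⟨Q', l, R, hQ', hl, hR, hzQ', hzR, rfl⟩
  have hsl : s l = s k ∨ s l = s k - 1 := by
    rcases hl with rfl | rfl
    exacts [zpow_index_pred_eq_or (by norm_num) (by norm_num) (by norm_num) hs hk, .inl rfl]
  have radius_lt (m : ℕ) : (10 : ℝ) ^ (-(m : ℤ)) < 50000 * (1 / 1000 : ℝ) ^ s m := by
    have := (hs m).2
    rw [zpow_sub_one₀ (by norm_num), inv_div, div_one] at this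
    linarith
  have hρkl : (1 / 1000 : ℝ) ^ s k ≤ (1 / 1000 : ℝ) ^ s l :=
    zpow_le_zpow_right_of_le_one₀ (by norm_num) (by norm_num) (by omega)
  have hρk : 0 < (1 / 1000 : ℝ) ^ s k := zpow_pos (by norm_num) _
  have hl₁ := (hs l).1
  have hk₂ := radius_lt k
  have hl₂ := radius_lt l
  rw [mem_ball] at hzQ' hzR
  refine (dIn_ball_le_mul _ (by positivity) ?_ ?_ _ _).trans <|
    mul_le_mul_of_nonneg_left (D.dIn_le_epsCD Pp PV _ _ Q (by norm_num) hsl (hNsub k Q' hQ').1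
      (hNsub l R hR).1 ?_ ?_) (by norm_num)
  all_goals
    simp only [mem_ball, sideLen] at hz ⊢
    linarith [dist_triangle_left (D.ctr (s k) Q) (D.ctr (s k) Q') z,
      dist_triangle_left (D.ctr (s k) Q) (D.ctr (s l) R) z]

/-- **Lemma `l:epsilonQ`**: with `ρ = 1/1000`, `c₀ = 1/500`, `K = 10⁴/ρ`,
`A₀ = 1000√d/(c₀ρ)`, `r_k = 10^{-k}` and `50ρ^{s(k)} ≤ r_k < 50ρ^{s(k)−1}`, if the points
`X_k = {x_Q : Q ∈ N k}` form `r_k`-nets of the centers `Y_k` of generation-`s(k)` cubes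
meeting `B(0,A₀)`, then for every `k ≥ 1`, every `Q ∈ 𝒟_{s(k)}` and every `z` with
`|z − x_Q| < 200ρ⁻¹ℓ(Q)` one has `ε'_k(z) ≤ K·ε(Q)`. -/
theorem epsPrime_le_epsQ (d : ℕ) (E : Set (EuclideanSpace ℝ (Fin (d + 1))))
    (hE : IsClosed E)
    (D : CDLattice (d + 1) E (1 / 1000))
    (Pp : ℤ → Set (EuclideanSpace ℝ (Fin (d + 1))) → EuclideanSpace ℝ (Fin (d + 1)))
    (PV : ℤ → Set (EuclideanSpace ℝ (Fin (d + 1))) →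
      Submodule ℝ (EuclideanSpace ℝ (Fin (d + 1))))
    (hPV : ∀ k : ℤ, ∀ Q ∈ D.gen k, Module.finrank ℝ (PV k Q) = d)
    (s : ℕ → ℤ)
    (hs : ∀ k : ℕ, 50 * (1 / 1000 : ℝ) ^ s k ≤ (10 : ℝ) ^ (-(k : ℤ)) ∧
      (10 : ℝ) ^ (-(k : ℤ)) < 50 * (1 / 1000 : ℝ) ^ (s k - 1))
    (N : ℕ → Set (Set (EuclideanSpace ℝ (Fin (d + 1)))))
    -- every selected cube is a generation-`s(k)` cube meeting `B(0, A₀)`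
    (hNsub : ∀ k : ℕ, ∀ Q ∈ N k, Q ∈ D.gen (s k) ∧
      (Q ∩ Metric.ball 0 ((1000 * Real.sqrt d) / ((1 / 500) * (1 / 1000)))).Nonempty)
    -- the centers of the selected cubes are `r_k`-separated
    (hNsep : ∀ k : ℕ, ∀ Q ∈ N k, ∀ Q' ∈ N k, Q ≠ Q' →
      (10 : ℝ) ^ (-(k : ℤ)) ≤ dist (D.ctr (s k) Q) (D.ctr (s k) Q'))
    -- and they form an `r_k`-net of `Y_k`
    (hNnet : ∀ k : ℕ, ∀ Q ∈ D.gen (s k),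
      (Q ∩ Metric.ball 0 ((1000 * Real.sqrt d) / ((1 / 500) * (1 / 1000)))).Nonempty →
      ∃ Q' ∈ N k, dist (D.ctr (s k) Q) (D.ctr (s k) Q') < (10 : ℝ) ^ (-(k : ℤ))) :
    ∀ k : ℕ, 1 ≤ k → ∀ Q ∈ D.gen (s k), ∀ z : EuclideanSpace ℝ (Fin (d + 1)),
      dist z (D.ctr (s k) Q) < 200 * (1 / 1000 : ℝ)⁻¹ * sideLen (1 / 1000) (s k) →
      epsPrime D Pp PV s N k z
        ≤ (10 ^ 4 / (1 / 1000 : ℝ)) * epsCD D Pp PV (10 ^ 4 / (1 / 1000 : ℝ)) (s k) Q :=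
  epsPrime_le_epsQ_general d E D Pp PV s hs N hNsub
end
end
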